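/- arXiv:2008.08192 — 4 statements merged into one kernel-verified Lean document; each statement's English description precedes it below -/
import Mathlib

section
/- In the weak commutativity group χ(G), for all x, y in G the relation [x, y^φ] = [x^φ, y] holds. -/
open scoped commutatorElement

/-! With Mathlib's convention `⁅a, b⁆ = a * b * a⁻¹ * b⁻¹`, expanding `⁅a * b, A * B⁆ = 1` by
the product rules for commutators and cancelling the factors `⁅a, A⁆` and `⁅b, B⁆` leaves
`A⁅a, B⁆A⁻¹ = a⁅A, b⁆a⁻¹`. For homomorphisms `f, f'` with `f g` commuting with `f' g` for every
`g`, take `a = f x`, `A = f' x` and `b = f (x⁻¹ y x)`, `B = f' (x⁻¹ y x)`: the conjugations then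
turn `b, B` into `f y, f' y`. -/

def chiRels (G : Type*) [Group G] : Subgroup (Monoid.Coprod G G) :=
  Subgroup.normalClosure {x | ∃ g : G, x = ⁅(Monoid.Coprod.inl g : Monoid.Coprod G G), Monoid.Coprod.inr g⁆}

instance (G : Type*) [Group G] : (chiRels G).Normal :=
  Subgroup.normalClosure_normal

def chi (G : Type*) [Group G] := Monoid.Coprod G G ⧸ chiRels G

instance (G : Type*) [Group G] : Group (chi G) :=
  QuotientGroup.Quotient.group _

/-- The canonical map `G →* χ(G)`. -/
def chiL (G : Type*) [Group G] : G →* chi G :=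
  (QuotientGroup.mk' (chiRels G)).comp Monoid.Coprod.inl

/-- The canonical map `G^φ →* χ(G)`, `g ↦ g^φ`. -/
def chiR (G : Type*) [Group G] : G →* chi G :=
  (QuotientGroup.mk' (chiRels G)).comp Monoid.Coprod.inr

/-- `D(G) = [G, G^φ] ≤ χ(G)`. -/
def chiD (G : Type*) [Group G] : Subgroup (chi G) :=
  ⁅(chiL G).range, (chiR G).range⁆

section
variable {H : Type*} [Group H]

theorem commutatorElement_conj_eq_of_commute {a b A B : H} (haA : Commute a A)
    (hbB : Commute b B) (hab : Commute (a * b) (A * B)) :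
    ⁅a, A * B * A⁻¹⁆ = ⁅A, a * b * a⁻¹⁆ := by
  have expand : a * ⁅b, A⁆ * a⁻¹ * (A * ⁅a, B⁆ * A⁻¹) = 1 := by
    have := hab.commutator_eq
    rwa [commutatorElement_mul_left_eq_conj_mul, commutatorElement_mul_right_eq_mul_conj,
      commutatorElement_mul_right_eq_mul_conj, hbB.commutator_eq, haA.commutator_eq,
      mul_one, mul_inv_cancel_right, one_mul] at this
  calc ⁅a, A * B * A⁻¹⁆ = A * ⁅a, B⁆ * A⁻¹ := by
        rw [conjugate_commutatorElement, haA.symm.mul_inv_cancel]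
    _ = (a * ⁅b, A⁆ * a⁻¹)⁻¹ := eq_inv_of_mul_eq_one_right expand
    _ = ⁅A, a * b * a⁻¹⁆ := by
        rw [conjugate_commutatorElement, haA.mul_inv_cancel, commutatorElement_inv]

theorem commutatorElement_apply_swap_of_forall_commute {G : Type*} [Group G] (f f' : G →* H)
    (hff' : ∀ g, Commute (f g) (f' g)) (x y : G) : ⁅f x, f' y⁆ = ⁅f' x, f y⁆ := by
  have h := commutatorElement_conj_eq_of_commute (hff' x) (hff' (x⁻¹ * y * x))
    (by simpa only [map_mul] using hff' (x * (x⁻¹ * y * x)))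
  have hy : x * (x⁻¹ * y * x) * x⁻¹ = y := by group
  simpa only [← map_inv, ← map_mul, hy] using h
end

theorem chiL_commute_chiR {G : Type*} [Group G] (g : G) : Commute (chiL G g) (chiR G g) := by
  have hrel : ⁅(Monoid.Coprod.inl g : Monoid.Coprod G G), Monoid.Coprod.inr g⁆ ∈ chiRels G :=
    Subgroup.subset_normalClosure ⟨g, rfl⟩
  have h := (QuotientGroup.eq_one_iff _).mpr hrel
  rw [← QuotientGroup.mk'_apply, map_commutatorElement] at h
  exact commutatorElement_eq_one_iff_commute.mp h

/-- In χ(G), [x, y^φ] = [x^φ, y] for all x, y ∈ G. -/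
theorem stmt_1 {G : Type*} [Group G] (x y : G) :
    ⁅chiL G x, chiR G y⁆ = ⁅chiR G x, chiL G y⁆ :=
  commutatorElement_apply_swap_of_forall_commute (chiL G) (chiR G) chiL_commute_chiR x y
end

section
/- In χ(G), for all x, y, z in G the relation [x, y^φ]^(z^φ) = [x, y^φ]^z holds, i.e., conjugation of [x,y^φ] by z^φ agrees with conjugation by z. -/
open scoped commutatorElement

/-! Applying the defining relation to `a⁻¹ b` gives the swap rule `⁅a^φ, b⁆ = ⁅a, b^φ⁆`. Writing
`⁅x, y^φ⁆^(z^φ) = ⁅x, (z⁻¹)^φ⁆⁻¹ ⁅x, (z⁻¹y)^φ⁆` and swapping both factors turns every `φ`-image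
of `z` into `z` itself. -/

section Commutators

variable {H : Type*} [Group H]

theorem inv_mul_commutatorElement_mul (u v w : H) :
    v⁻¹ * ⁅u, w⁆ * v = ⁅u, v⁻¹⁆⁻¹ * ⁅u, v⁻¹ * w⁆ := by
  group

theorem commutatorElement_swap_of_commute {A B A' B' : H} (hA : Commute A A')
    (hB : Commute B B') (h : Commute (A⁻¹ * B) (A'⁻¹ * B')) :
    ⁅A', B⁆ = ⁅A, B'⁆ :=
  calc ⁅A', B⁆ = A * A' * (A⁻¹ * B * (A'⁻¹ * B')) * B'⁻¹ * B⁻¹ := by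
        rw [hA.eq, commutatorElement_def]; group
    _ = A * A' * (A'⁻¹ * B' * (A⁻¹ * B)) * B'⁻¹ * B⁻¹ := by rw [h.eq]
    _ = A * B' * A⁻¹ * (B * B'⁻¹) * B⁻¹ := by group
    _ = ⁅A, B'⁆ := by rw [hB.inv_right.eq, commutatorElement_def]; group

end Commutators

section CommutingHoms

variable {G H : Type*} [Group G] [Group H] {f g : G →* H}

theorem commutatorElement_map_swap (hfg : ∀ a, Commute (f a) (g a)) (a b : G) :
    ⁅g a, f b⁆ = ⁅f a, g b⁆ :=
  commutatorElement_swap_of_commute (hfg a) (hfg b) <| by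
    simpa only [map_mul, map_inv] using hfg (a⁻¹ * b)

theorem conj_commutatorElement_map_eq (hfg : ∀ a, Commute (f a) (g a)) (x y z : G) :
    (g z)⁻¹ * ⁅f x, g y⁆ * g z = (f z)⁻¹ * ⁅f x, g y⁆ * f z := by
  rw [inv_mul_commutatorElement_mul, ← map_inv, ← map_mul, ← commutatorElement_map_swap hfg,
    ← commutatorElement_map_swap hfg, map_mul, map_inv, ← inv_mul_commutatorElement_mul,
    commutatorElement_map_swap hfg]

end CommutingHoms

/-- In χ(G), conjugation of [x, y^φ] by z^φ agrees with conjugation by z. -/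
theorem stmt_2 {G : Type*} [Group G] (x y z : G) :
    (chiR G z)⁻¹ * ⁅chiL G x, chiR G y⁆ * chiR G z =
      (chiL G z)⁻¹ * ⁅chiL G x, chiR G y⁆ * chiL G z :=
  conj_commutatorElement_map_eq chiL_commute_chiR x y z
end

section
/- In χ(G), for all x, y₁, ..., yₙ in G, the left-normed commutator identity [x^φ, y₁, ..., yₙ, x] = [x, y₁, ..., yₙ, x^φ] holds. -/
/-!
Put `t = x⁻¹ x^φ`. The relations `[g, g^φ] = 1` for `g = u, v, uv, u²v` show that every
`G`-conjugate of `t` commutes with `x^φ`. So `x^φ` lies in the centralizer `A` of these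
conjugates, while `t` lies in the centralizer of `A`, and `G` normalizes both subgroups. Hence
taking commutators with elements of `G` keeps `A` inside `A`, and a factor `σ` from the
centralizer of `A` splits off: `[a σ, g] = [a, g] [σ, g]`. Writing `x = x^φ t⁻¹` gives
`[x, y₁, …, yₙ] = [x^φ, y₁, …, yₙ] σ`, and both sides of the identity reduce to
`[[x^φ, y₁, …, yₙ], x^φ]`.
-/

open scoped commutatorElement

namespace Subgroup

variable {K : Type*} [Group K]

theorem normalizer_le_normalizer_centralizer {H : Subgroup K} {s : Set K}
    (hH : H ≤ normalizer s) : H ≤ normalizer (centralizer s) := by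
  rw [le_normalizer_iff]
  intro h hh z hz y hy
  have hy' : h⁻¹ * y * h ∈ s := by
    simpa using (le_set_normalizer_iff.mp hH) h⁻¹ (inv_mem hh) y hy
  calc y * (h * z * h⁻¹) = h * (h⁻¹ * y * h * z) * h⁻¹ := by group
    _ = h * (z * (h⁻¹ * y * h)) * h⁻¹ := by rw [hz _ hy']
    _ = h * z * h⁻¹ * y := by group

theorem commutatorElement_mem_of_mem_normalizer {A : Subgroup K} {a k : K} (ha : a ∈ A)
    (hk : k ∈ normalizer (A : Set K)) : ⁅a, k⁆ ∈ A := by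
  rw [commutatorElement_def, mul_assoc a, mul_assoc]
  exact mul_mem ha ((hk _).mp (inv_mem ha))

end Subgroup

section LeftNormed

open Subgroup

variable {K : Type*} [Group K]

/-- `leftNormedCommutator d [k₁, …, kₙ] = [d, k₁, …, kₙ]`. -/
def leftNormedCommutator (d : K) (ks : List K) : K :=
  ks.foldl (fun a k => ⁅a, k⁆) d

@[simp]
theorem leftNormedCommutator_cons (d k : K) (ks : List K) :
    leftNormedCommutator d (k :: ks) = leftNormedCommutator ⁅d, k⁆ ks := rfl

theorem leftNormedCommutator_mem {A : Subgroup K} {ks : List K}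
    (hks : ∀ k ∈ ks, k ∈ normalizer (A : Set K)) {d : K} (hd : d ∈ A) :
    leftNormedCommutator d ks ∈ A := by
  induction ks generalizing d with
  | nil => exact hd
  | cons k ks ih =>
    exact ih (fun k' hk' => hks k' (List.mem_cons_of_mem k hk'))
      (commutatorElement_mem_of_mem_normalizer hd (hks k List.mem_cons_self))

theorem commutatorElement_mul_of_mem_centralizer {A : Subgroup K} {d σ k : K} (hd : d ∈ A)
    (hσ : σ ∈ centralizer (A : Set K)) (hkA : k ∈ normalizer (A : Set K))
    (hkσ : k ∈ normalizer (centralizer (A : Set K) : Set K)) :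
    ⁅d * σ, k⁆ = ⁅d, k⁆ * ⁅σ, k⁆ := by
  have hσk := commutatorElement_mem_of_mem_normalizer hσ hkσ
  have hdk := commutatorElement_mem_of_mem_normalizer hd hkA
  rw [commutatorElement_mul_left_eq_conj_mul, hσk d hd, mul_inv_cancel_right]
  exact (hσk _ hdk).symm

theorem exists_leftNormedCommutator_mul_eq {A : Subgroup K} {ks : List K}
    (hks : ∀ k ∈ ks, k ∈ normalizer (A : Set K)) {d σ : K} (hd : d ∈ A)
    (hσ : σ ∈ centralizer (A : Set K)) :
    ∃ σ' ∈ centralizer (A : Set K),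
      leftNormedCommutator (d * σ) ks = leftNormedCommutator d ks * σ' := by
  induction ks generalizing d σ with
  | nil => exact ⟨σ, hσ, rfl⟩
  | cons k ks ih =>
    have hkA := hks k List.mem_cons_self
    have hkσ := normalizer_le_normalizer_centralizer le_rfl hkA
    rw [leftNormedCommutator_cons, leftNormedCommutator_cons,
      commutatorElement_mul_of_mem_centralizer hd hσ hkA hkσ]
    exact ih (fun k' hk' => hks k' (List.mem_cons_of_mem k hk'))
      (commutatorElement_mem_of_mem_normalizer hd hkA)
      (commutatorElement_mem_of_mem_normalizer hσ hkσ)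

end LeftNormed

section CommutingPair

open Subgroup

variable {G K : Type*} [Group G] [Group K]

/-- For `χ(G)` this is `g⁻¹ g^φ`. -/
def leftDiv (L R : G →* K) (g : G) : K := (L g)⁻¹ * R g

theorem leftDiv_mul (L R : G →* K) (u v : G) :
    leftDiv L R (u * v) = (L v)⁻¹ * leftDiv L R u * L v * leftDiv L R v := by
  simp only [leftDiv, map_mul]
  group

theorem range_le_normalizer_range_conj (L : G →* K) (k : K) :
    L.range ≤ normalizer (Set.range fun w => (L w)⁻¹ * k * L w) := by
  rw [le_set_normalizer_iff]
  rintro _ ⟨v, rfl⟩ _ ⟨w, rfl⟩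
  exact ⟨w * v⁻¹, by simp only [map_mul, map_inv]; group⟩

variable {L R : G →* K} (hLR : ∀ g, Commute (L g) (R g))
include hLR

theorem commute_leftDiv (g : G) : Commute (L g) (leftDiv L R g) :=
  (Commute.refl (L g)).inv_right.mul_right (hLR g)

theorem leftDiv_mul_self (g : G) : leftDiv L R g * L g = R g := by
  rw [← (commute_leftDiv hLR g).eq, leftDiv, mul_inv_cancel_left]

/-- The relation `[uv, (uv)^φ] = 1` makes `leftDiv` a cocycle for left as well as right
conjugation. -/
theorem leftDiv_mul_eq_mul_conj (u v : G) :
    leftDiv L R (u * v) = leftDiv L R u * (L u * leftDiv L R v * (L u)⁻¹) := by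
  have huv : Commute (L u * L v) (R u * R v) := by
    simpa only [map_mul] using hLR (u * v)
  have hu : (L u)⁻¹ * R u * L u = R u := by
    rw [mul_assoc, ← (hLR u).eq, inv_mul_cancel_left]
  calc leftDiv L R (u * v) = (L u * L v)⁻¹ * (R u * R v) := by rw [leftDiv, map_mul, map_mul]
    _ = R u * R v * (L u * L v)⁻¹ := huv.inv_left.eq
    _ = (L u)⁻¹ * R u * L u * (R v * (L v)⁻¹) * (L u)⁻¹ := by rw [hu]; group
    _ = leftDiv L R u * (L u * leftDiv L R v * (L u)⁻¹) := by
      rw [← (hLR v).inv_left.eq, leftDiv, leftDiv]; group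

/-- Comparing the two cocycle expansions of `leftDiv` at `u * v` and at `u * (u * v)`. -/
theorem commute_conj_leftDiv (u v : G) :
    Commute ((L v)⁻¹ * leftDiv L R u * L v) (R u) := by
  set t := leftDiv L R u
  set p := (L v)⁻¹ * t * L v
  set s := leftDiv L R v
  have htu : (L u)⁻¹ * t * L u = t := by
    rw [mul_assoc, ← (commute_leftDiv hLR u).eq, inv_mul_cancel_left]
  have hpt : leftDiv L R (u * (u * v)) = p * leftDiv L R (u * v) := by
    rw [leftDiv_mul, map_mul, mul_inv_rev,
      show (L v)⁻¹ * (L u)⁻¹ * t * (L u * L v) = (L v)⁻¹ * ((L u)⁻¹ * t * L u) * L v by group,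
      htu]
  have key : t * L u * p = p * (t * L u) :=
    calc t * L u * p = t * (L u * (p * s) * (L u)⁻¹) * (L u * s⁻¹) := by group
      _ = p * (t * (L u * s * (L u)⁻¹)) * (L u * s⁻¹) := by
        rw [← leftDiv_mul, ← leftDiv_mul_eq_mul_conj hLR, hpt,
          leftDiv_mul_eq_mul_conj hLR u v]
      _ = p * (t * L u) := by group
  rw [leftDiv_mul_self hLR] at key
  exact key.symm

theorem mem_centralizer_range_conj_leftDiv (u : G) :
    R u ∈ centralizer (Set.range fun w => (L w)⁻¹ * leftDiv L R u * L w) := by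
  rintro _ ⟨w, rfl⟩
  exact (commute_conj_leftDiv hLR u w).eq

theorem commutatorElement_leftNormedCommutator_swap (x : G) {ks : List K}
    (hks : ∀ k ∈ ks, k ∈ L.range) :
    ⁅leftNormedCommutator (R x) ks, L x⁆ = ⁅leftNormedCommutator (L x) ks, R x⁆ := by
  set t := leftDiv L R x
  set A := centralizer (Set.range fun w => (L w)⁻¹ * t * L w)
  have hksA : ∀ k ∈ ks, k ∈ normalizer (A : Set K) := fun k hk =>
    normalizer_le_normalizer_centralizer (range_le_normalizer_range_conj L t) (hks k hk)
  have hRA : R x ∈ A := mem_centralizer_range_conj_leftDiv hLR x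
  have htA : t ∈ centralizer (A : Set K) :=
    Set.subset_centralizer_centralizer ⟨1, by simp only [map_one, inv_one, one_mul, mul_one]⟩
  have hL : L x = R x * t⁻¹ := by
    simp only [t, leftDiv, mul_inv_rev, inv_inv, mul_inv_cancel_left]
  obtain ⟨σ, hσ, hfold⟩ := exists_leftNormedCommutator_mul_eq hksA hRA (inv_mem htA)
  have hc := leftNormedCommutator_mem hksA hRA
  calc ⁅leftNormedCommutator (R x) ks, L x⁆ = ⁅leftNormedCommutator (R x) ks, R x⁆ := by
        rw [hL, commutatorElement_mul_right_eq_mul_conj,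
          commutatorElement_eq_one_iff_mul_comm.mpr (inv_mem htA _ hc)]
        group
    _ = ⁅leftNormedCommutator (R x) ks * σ, R x⁆ := by
        rw [commutatorElement_mul_left_eq_conj_mul,
          commutatorElement_eq_one_iff_mul_comm.mpr (hσ _ hRA).symm]
        group
    _ = ⁅leftNormedCommutator (L x) ks, R x⁆ := by rw [hL, hfold]

end CommutingPair

/-- In χ(G), the left-normed commutator identity
[x^φ, y₁, …, yₙ, x] = [x, y₁, …, yₙ, x^φ] holds. -/
theorem stmt_3 {G : Type*} [Group G] (x : G) (ys : List G) :
    ⁅ys.foldl (fun a b => ⁅a, chiL G b⁆) (chiR G x), chiL G x⁆ =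
      ⁅ys.foldl (fun a b => ⁅a, chiL G b⁆) (chiL G x), chiR G x⁆ := by
  simpa only [leftNormedCommutator, List.foldl_map] using
    commutatorElement_leftNormedCommutator_swap chiL_commute_chiR x (ks := ys.map (chiL G))
      (by simp)
end

section
/- Let p be an odd prime and G a finite p-group of derived length d. Then exp(M(G)) divides exp(G)^d, where M(G) is the Schur multiplier of G. -/
/-- The Schur multiplier of `G`, via Hopf's formula: for the free presentation
`1 → R → F → G → 1` with `F` the free group on `G` and `R = ker(F →* G)`,
`M(G) = (R ⊓ [F,F]) / [F,R]`. -/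
def schurMultiplier (G : Type*) [Group G] : Type _ :=
  ↥((FreeGroup.lift (id : G → G)).ker ⊓ commutator (FreeGroup G)) ⧸
    (⁅(⊤ : Subgroup (FreeGroup G)), (FreeGroup.lift (id : G → G)).ker⁆.subgroupOf
      ((FreeGroup.lift (id : G → G)).ker ⊓ commutator (FreeGroup G)))

instance (G : Type*) [Group G] : Group (schurMultiplier G) :=
  QuotientGroup.Quotient.group _

/-!
Write `e = exp G`, a power of `p`, hence odd. By Hopf's formula, with `F` free on `G` and `R` the
kernel of `F → G`, it suffices that `x ^ e ^ d ∈ [F, R]` for `x ∈ [F, F]`. In `F / [F, R]` the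
image of `R` is central and contains every `e`-th power and the `d`-th derived subgroup.

So it suffices that `[H, H]` has exponent dividing `e ^ d` whenever all `e`-th powers and `H⁽ᵈ⁾`
are central in `H`. If `W` is normal with `[W, W]` central, the class-two identities
`(xy)ᵏ = xᵏ yᵏ [y, x]^(k choose 2)` and `[h, wᵏ] = [h, w]ᵏ [w, [h, w]]^(k choose 2)`, together
with `e ∣ (e choose 2)`, show that `[H, W]` has exponent dividing `e`. Taking `W = H⁽ᵈ⁻¹⁾` and
passing to `H / [H, W]`, where `W` becomes central, lowers `d` by one at the cost of a factor `e`.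
-/

open Subgroup
open scoped commutatorElement

theorem Odd.dvd_choose_two {n : ℕ} (hn : Odd n) : n ∣ n.choose 2 := by
  obtain ⟨m, rfl⟩ := hn
  exact ⟨m, by rw [Nat.choose_two_right, Nat.add_sub_cancel, mul_left_comm,
    Nat.mul_div_cancel_left _ two_pos]⟩

section ClassTwo

variable {H : Type*} [Group H]

theorem pow_mul_eq_mul_pow_mul_commutatorElement_pow {x y : H} (h : ⁅y, x⁆ ∈ center H) :
    ∀ k : ℕ, y ^ k * x = x * y ^ k * ⁅y, x⁆ ^ k
  | 0 => by simp
  | k + 1 => by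
    have ih := pow_mul_eq_mul_pow_mul_commutatorElement_pow h k
    have hyx : y * x = x * y * ⁅y, x⁆ := by rw [mem_center_iff.mp h (x * y)]; group
    generalize ⁅y, x⁆ = c at h hyx ih ⊢
    calc y ^ (k + 1) * x = y * (y ^ k * x) := by group
      _ = y * x * y ^ k * c ^ k := by rw [ih]; group
      _ = x * y * (y ^ k * c) * c ^ k := by rw [hyx, mem_center_iff.mp h (y ^ k)]; group
      _ = x * y ^ (k + 1) * c ^ (k + 1) := by group

theorem mul_pow_of_commutatorElement_mem_center {x y : H} (h : ⁅y, x⁆ ∈ center H) :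
    ∀ k : ℕ, (x * y) ^ k = x ^ k * y ^ k * ⁅y, x⁆ ^ k.choose 2
  | 0 => by simp
  | k + 1 => by
    have ih := mul_pow_of_commutatorElement_mem_center h k
    have hyx := pow_mul_eq_mul_pow_mul_commutatorElement_pow h k
    generalize ⁅y, x⁆ = c at h ih hyx ⊢
    have hck := mem_center_iff.mp (pow_mem h k)
    have hcC := mem_center_iff.mp (pow_mem h (k.choose 2))
    calc (x * y) ^ (k + 1) = x ^ k * y ^ k * (c ^ k.choose 2 * (x * y)) := by
          rw [pow_succ, ih]; group
      _ = x ^ k * (y ^ k * x) * y * c ^ k.choose 2 := by rw [← hcC]; group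
      _ = x ^ (k + 1) * y ^ k * (c ^ k * y) * c ^ k.choose 2 := by rw [hyx]; group
      _ = x ^ (k + 1) * y ^ (k + 1) * c ^ (k + 1).choose 2 := by
          rw [← hck, Nat.choose_succ_succ', Nat.choose_one_right, pow_add]; group

theorem commutatorElement_pow_right_of_mem_center {h w : H} (hz : ⁅w, ⁅h, w⁆⁆ ∈ center H) :
    ∀ k : ℕ, ⁅h, w ^ k⁆ = ⁅h, w⁆ ^ k * ⁅w, ⁅h, w⁆⁆ ^ k.choose 2
  | 0 => by simp
  | k + 1 => by
    have ih := commutatorElement_pow_right_of_mem_center hz k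
    have hsplit : ⁅h, w ^ (k + 1)⁆ = ⁅h, w⁆ * (w * ⁅h, w ^ k⁆ * w⁻¹) := by
      rw [pow_succ', commutatorElement_mul_right_eq_mul_conj]; group
    have hconj : w * ⁅h, w⁆ * w⁻¹ = ⁅w, ⁅h, w⁆⁆ * ⁅h, w⁆ := by group
    rw [hsplit, ih]
    generalize ⁅h, w⁆ = t at hz hconj ⊢
    generalize ⁅w, t⁆ = z at hz hconj ⊢
    have hzk := mem_center_iff.mp (pow_mem hz k)
    have hzC := mem_center_iff.mp (pow_mem hz (k.choose 2))
    have hconj_pow : w * t ^ k * w⁻¹ = z ^ k * t ^ k := by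
      rw [← conj_pow, hconj, (Commute.symm (mem_center_iff.mp hz t)).mul_pow]
    calc t * (w * (t ^ k * z ^ k.choose 2) * w⁻¹)
        = t * (w * t ^ k * w⁻¹) * (w * z ^ k.choose 2 * w⁻¹) := by group
      _ = t * (z ^ k * t ^ k) * z ^ k.choose 2 := by rw [hconj_pow, hzC w]; group
      _ = t ^ (k + 1) * z ^ (k + 1).choose 2 := by
          rw [← hzk, Nat.choose_succ_succ', Nat.choose_one_right, pow_add]; group

variable {n : ℕ}

theorem commutatorElement_pow_eq_one_of_mem_center {x y : H} (hxy : ⁅x, y⁆ ∈ center H)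
    (hy : y ^ n ∈ center H) : ⁅x, y⁆ ^ n = 1 := by
  have hz : ⁅y, ⁅x, y⁆⁆ = 1 :=
    commutatorElement_eq_one_iff_mul_comm.mpr (mem_center_iff.mp hxy y)
  have hxyn : ⁅x, y ^ n⁆ = 1 :=
    commutatorElement_eq_one_iff_mul_comm.mpr (mem_center_iff.mp hy x)
  rw [← hxyn, commutatorElement_pow_right_of_mem_center (hz ▸ one_mem _), hz, one_pow, mul_one]

theorem commutatorElement_pow_eq_one_of_dvd_choose_two (hn : n ∣ n.choose 2) {h w : H}
    (hz : ⁅w, ⁅h, w⁆⁆ ∈ center H) (hw : w ^ n ∈ center H) (ht : ⁅h, w⁆ ^ n ∈ center H) :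
    ⁅h, w⁆ ^ n = 1 := by
  obtain ⟨m, hm⟩ := hn
  have hhwn : ⁅h, w ^ n⁆ = 1 :=
    commutatorElement_eq_one_iff_mul_comm.mpr (mem_center_iff.mp hw h)
  rw [commutatorElement_pow_right_of_mem_center hz, hm, pow_mul,
    commutatorElement_pow_eq_one_of_mem_center hz ht, one_pow, mul_one] at hhwn
  exact hhwn

theorem pow_eq_one_of_mem_commutator_top (hn : Odd n) {W : Subgroup H} [W.Normal]
    (hWW : ⁅W, W⁆ ≤ center H) (hpow : ∀ h : H, h ^ n ∈ center H) {x : H}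
    (hx : x ∈ ⁅(⊤ : Subgroup H), W⁆) : x ^ n = 1 := by
  obtain ⟨m, hm⟩ := hn.dvd_choose_two
  have hWW' {a b : H} (ha : a ∈ W) (hb : b ∈ W) : ⁅a, b⁆ ∈ center H :=
    hWW (commutator_mem_commutator ha hb)
  let T : Subgroup H :=
    { carrier := {g | g ∈ W ∧ g ^ n = 1}
      one_mem' := ⟨W.one_mem, one_pow n⟩
      mul_mem' := fun {a b} ⟨ha, ha'⟩ ⟨hb, hb'⟩ => ⟨W.mul_mem ha hb, by
        rw [mul_pow_of_commutatorElement_mem_center (hWW' hb ha), ha', hb', hm, pow_mul,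
          commutatorElement_pow_eq_one_of_mem_center (hWW' hb ha) (hpow a)]
        group⟩
      inv_mem' := fun {a} ⟨ha, ha'⟩ => ⟨W.inv_mem ha, by rw [inv_pow, ha', inv_one]⟩ }
  suffices ⁅⊤, W⁆ ≤ T from (this hx).2
  refine commutator_le.mpr fun h _ w hw => ?_
  have ht : ⁅h, w⁆ ∈ W := commutator_le_right ⊤ W (commutator_mem_commutator (mem_top h) hw)
  exact ⟨ht, commutatorElement_pow_eq_one_of_dvd_choose_two ⟨m, hm⟩
    (hWW' hw ht) (hpow w) (hpow _)⟩

end ClassTwo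

theorem MonoidHom.map_mem_commutator {F F' : Type*} [Group F] [Group F'] (f : F →* F') {x : F}
    (hx : x ∈ commutator F) : f x ∈ commutator F' := by
  rw [← derivedSeries_one] at hx ⊢
  exact map_derivedSeries_le_derivedSeries f 1 ⟨x, hx, rfl⟩

theorem Subgroup.map_mk'_le_center {H : Type*} [Group H] {N K : Subgroup H} [N.Normal]
    (h : ⁅(⊤ : Subgroup H), K⁆ ≤ N) : K.map (QuotientGroup.mk' N) ≤ center (H ⧸ N) := by
  rw [← commutator_top_left_eq_bot_iff_le_center,
    ← map_top_of_surjective _ (QuotientGroup.mk'_surjective N), ← map_commutator,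
    map_eq_bot_iff, QuotientGroup.ker_mk']
  exact h

theorem pow_pow_eq_one_of_derivedSeries_le_center {n : ℕ} (hn : Odd n) (d : ℕ)
    (H : Type*) [Group H] (hpow : ∀ h : H, h ^ n ∈ center H)
    (hder : derivedSeries H d ≤ center H) {x : H} (hx : x ∈ commutator H) :
    x ^ n ^ d = 1 := by
  induction d generalizing H with
  | zero =>
    rw [derivedSeries_zero, top_le_iff, ← commutator_eq_bot_iff_center_eq_top] at hder
    simpa [hder] using hx
  | succ d ih =>
    set W := derivedSeries H d
    let π := QuotientGroup.mk' ⁅(⊤ : Subgroup H), W⁆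
    have hπ : Function.Surjective π := QuotientGroup.mk'_surjective _
    have hcenter : (center H).map π ≤ center (H ⧸ ⁅(⊤ : Subgroup H), W⁆) :=
      map_mk'_le_center ((commutator_top_left_eq_bot_iff_le_center.mpr le_rfl).trans_le bot_le)
    have hπx : π x ^ n ^ d = 1 := by
      refine ih _ (fun h => ?_) ?_ ?_
      · obtain ⟨a, rfl⟩ := hπ h
        exact hcenter ⟨a ^ n, hpow a, map_pow π a n⟩
      · rw [← map_derivedSeries_eq hπ]
        exact map_mk'_le_center le_rfl
      · exact π.map_mem_commutator hx
    have hxD : x ^ n ^ d ∈ ⁅(⊤ : Subgroup H), W⁆ := by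
      rwa [← QuotientGroup.ker_mk' ⁅(⊤ : Subgroup H), W⁆, MonoidHom.mem_ker, map_pow]
    rw [pow_succ, pow_mul]
    exact pow_eq_one_of_mem_commutator_top hn hder hpow hxD

theorem pow_pow_mem_commutator_top_of_derivedSeries_le {F : Type*} [Group F] {n : ℕ} (hn : Odd n)
    {R : Subgroup F} [R.Normal] (hpow : ∀ f : F, f ^ n ∈ R) {d : ℕ}
    (hder : derivedSeries F d ≤ R) {x : F} (hx : x ∈ commutator F) :
    x ^ n ^ d ∈ ⁅(⊤ : Subgroup F), R⁆ := by
  let π := QuotientGroup.mk' ⁅(⊤ : Subgroup F), R⁆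
  have hπ : Function.Surjective π := QuotientGroup.mk'_surjective _
  have hR : R.map π ≤ center (F ⧸ ⁅(⊤ : Subgroup F), R⁆) := map_mk'_le_center le_rfl
  rw [← QuotientGroup.ker_mk' ⁅(⊤ : Subgroup F), R⁆, MonoidHom.mem_ker, map_pow]
  refine pow_pow_eq_one_of_derivedSeries_le_center hn d _ (fun f => ?_) ?_ ?_
  · obtain ⟨a, rfl⟩ := hπ f
    exact hR ⟨a ^ n, hpow a, map_pow π a n⟩
  · rw [← map_derivedSeries_eq hπ]
    exact (map_mono hder).trans hR
  · exact π.map_mem_commutator hx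

theorem Monoid.exponent_quotient_subgroupOf_dvd {F : Type*} [Group F] {S N : Subgroup F}
    [N.Normal] {k : ℕ} (h : ∀ x ∈ S, x ^ k ∈ N) :
    Monoid.exponent (S ⧸ N.subgroupOf S) ∣ k :=
  Monoid.exponent_dvd_of_forall_pow_eq_one fun ξ => QuotientGroup.induction_on ξ fun x => by
    rw [← QuotientGroup.mk_pow, QuotientGroup.eq_one_iff, mem_subgroupOf, coe_pow]
    exact h x x.2

theorem stmt_19_general {G : Type*} [Group G] [Finite G] (p : ℕ) (hp : p.Prime)
    (hpodd : Odd p) (hpG : IsPGroup p G)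
    (d : ℕ) (hd : derivedSeries G d = ⊥) :
    Monoid.exponent (schurMultiplier G) ∣ Monoid.exponent G ^ d := by
  have : Fact p.Prime := ⟨hp⟩
  obtain ⟨k, hk⟩ := hpG.exists_exponent_eq_pow
  have hodd : Odd (Monoid.exponent G) := hk ▸ hpodd.pow
  refine Monoid.exponent_quotient_subgroupOf_dvd fun x hx =>
    pow_pow_mem_commutator_top_of_derivedSeries_le hodd (fun f => ?_) ?_ hx.2
  · rw [MonoidHom.mem_ker, map_pow, Monoid.pow_exponent_eq_one]
  · rw [← Subgroup.map_eq_bot_iff, ← le_bot_iff, ← hd]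
    exact map_derivedSeries_le_derivedSeries _ d

/-- If p is an odd prime and G is a finite p-group of derived length d, then
exp(M(G)) divides exp(G)^d. -/
theorem stmt_19 {G : Type*} [Group G] [Finite G] (p : ℕ) (hp : p.Prime)
    (hpodd : Odd p) (hpG : IsPGroup p G)
    (d : ℕ) (hd : derivedSeries G d = ⊥)
    (hmin : ∀ k, derivedSeries G k = ⊥ → d ≤ k) :
    Monoid.exponent (schurMultiplier G) ∣ Monoid.exponent G ^ d :=
  stmt_19_general p hp hpodd hpG d hd
end
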